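/- Let d ≥ 1, λ > 0, σ > 0, θ = λσ², 0 ≤ x ≤ L, and define T(x) = (1/(λ^(d/2) σ²)) ∫ₓᴸ z^(1-d) e^(λ z²) γ(d/2, λ z²) dz. Then T(x) ≤ (1/θ)·(e^(λ L²) − e^(λ x²))/d. -/

import Mathlib

noncomputable def lowerGamma (a x : ℝ) : ℝ := ∫ t in (0:ℝ)..x, t ^ (a - 1) * Real.exp (-t)

noncomputable def mfet (d : ℕ) (lam σ x L : ℝ) : ℝ :=
  (1 / (lam ^ ((d : ℝ) / 2) * σ ^ 2)) *
    ∫ z in x..L, z ^ ((1 : ℝ) - d) * Real.exp (lam * z ^ 2) * lowerGamma ((d : ℝ) / 2) (lam * z ^ 2)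

/-!
Bounding `e^{-t} ≤ 1` in the lower incomplete Gamma function gives `γ(d/2, λz²) ≤ 2 λ^{d/2} z^d / d`,
so the integrand of `T` is at most `(2 λ^{d/2} / d) z e^{λz²}`, whose integral over `[x, L]` is
`λ^{d/2} (e^{λL²} - e^{λx²}) / (d λ)` in closed form.
-/

open Real Set MeasureTheory

theorem intervalIntegral.integral_mono_on_of_nonneg {f g : ℝ → ℝ} {a b : ℝ} (hab : a ≤ b)
    (hf : ∀ x ∈ Ioc a b, 0 ≤ f x) (hg : IntervalIntegrable g volume a b)
    (hfg : ∀ x ∈ Ioc a b, f x ≤ g x) :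
    ∫ x in a..b, f x ≤ ∫ x in a..b, g x := by
  rw [intervalIntegral.integral_of_le hab, intervalIntegral.integral_of_le hab]
  exact integral_mono_of_nonneg (ae_restrict_of_forall_mem measurableSet_Ioc hf) hg.1
    (ae_restrict_of_forall_mem measurableSet_Ioc hfg)

theorem lowerGamma_nonneg (a : ℝ) {y : ℝ} (hy : 0 ≤ y) : 0 ≤ lowerGamma a y :=
  intervalIntegral.integral_nonneg hy fun t ht => by
    have := ht.1
    positivity

theorem lowerGamma_le_rpow_div {a y : ℝ} (ha : 0 < a) (hy : 0 ≤ y) :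
    lowerGamma a y ≤ y ^ a / a := by
  have hpow : IntervalIntegrable (fun t : ℝ => t ^ (a - 1)) volume 0 y :=
    intervalIntegral.intervalIntegrable_rpow' (by linarith)
  calc lowerGamma a y ≤ ∫ t in (0:ℝ)..y, t ^ (a - 1) := by
        refine intervalIntegral.integral_mono_on hy
          (hpow.mul_continuousOn (continuous_exp.comp continuous_neg).continuousOn) hpow ?_
        intro t ht
        have hexp : exp (-t) ≤ 1 := exp_le_one_iff.mpr (by linarith [ht.1])
        exact mul_le_of_le_one_right (rpow_nonneg ht.1 _) hexp
    _ = y ^ a / a := by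
        rw [integral_rpow (Or.inl (by linarith)), sub_add_cancel, zero_rpow ha.ne']
        ring

theorem rpow_one_sub_mul_lowerGamma_le {d lam z : ℝ} (hd : 0 < d) (hlam : 0 ≤ lam)
    (hz : 0 ≤ z) :
    z ^ (1 - d) * lowerGamma (d / 2) (lam * z ^ 2) ≤ 2 * lam ^ (d / 2) / d * z := by
  rcases hz.eq_or_lt with rfl | hz
  · simp [lowerGamma]
  have hγ := lowerGamma_le_rpow_div (half_pos hd) (by positivity : 0 ≤ lam * z ^ 2)
  have hsq : (lam * z ^ 2) ^ (d / 2) = lam ^ (d / 2) * z ^ d := by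
    rw [mul_rpow hlam (by positivity), ← rpow_natCast, ← rpow_mul hz.le]
    ring_nf
  calc z ^ (1 - d) * lowerGamma (d / 2) (lam * z ^ 2)
      ≤ z ^ (1 - d) * ((lam * z ^ 2) ^ (d / 2) / (d / 2)) :=
        mul_le_mul_of_nonneg_left hγ (by positivity)
    _ = 2 * lam ^ (d / 2) / d * (z ^ (1 - d) * z ^ d) := by
        rw [hsq]
        field_simp
    _ = 2 * lam ^ (d / 2) / d * z := by
        rw [← rpow_add hz, sub_add_cancel, rpow_one]

theorem integral_mul_exp_mul_sq {lam : ℝ} (hlam : lam ≠ 0) (a b : ℝ) :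
    ∫ z in a..b, z * exp (lam * z ^ 2) = (exp (lam * b ^ 2) - exp (lam * a ^ 2)) / (2 * lam) := by
  have hderiv (z : ℝ) :
      HasDerivAt (fun z => exp (lam * z ^ 2) / (2 * lam)) (z * exp (lam * z ^ 2)) z := by
    refine ((((hasDerivAt_pow 2 z).const_mul lam).exp).div_const (2 * lam)).congr_deriv ?_
    field_simp
    ring
  rw [intervalIntegral.integral_eq_sub_of_hasDerivAt (fun z _ => hderiv z)
    ((by fun_prop : Continuous fun z : ℝ => z * exp (lam * z ^ 2)).intervalIntegrable _ _)]
  ring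

theorem mfet_upper_bound_crude_general (d : ℕ) (hd : 1 ≤ d) (lam σ θ x L : ℝ) (hlam : 0 < lam)
    (hθ : θ = lam * σ ^ 2) (hx : 0 ≤ x) (hxL : x ≤ L) :
    mfet d lam σ x L ≤ (1 / θ) * (Real.exp (lam * L ^ 2) - Real.exp (lam * x ^ 2)) / d := by
  have hd_pos : (0 : ℝ) < d := by exact_mod_cast hd
  set C := 2 * lam ^ ((d : ℝ) / 2) / d
  have hintegral : ∫ z in x..L, z ^ ((1 : ℝ) - d) * exp (lam * z ^ 2) *
        lowerGamma ((d : ℝ) / 2) (lam * z ^ 2)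
      ≤ ∫ z in x..L, C * (z * exp (lam * z ^ 2)) := by
    refine intervalIntegral.integral_mono_on_of_nonneg hxL (fun z hz => ?_)
      ((by fun_prop : Continuous fun z : ℝ => C * (z * exp (lam * z ^ 2))).intervalIntegrable _ _)
      (fun z hz => ?_)
    · have hz : 0 ≤ z := hx.trans hz.1.le
      have := lowerGamma_nonneg ((d : ℝ) / 2) (by positivity : 0 ≤ lam * z ^ 2)
      positivity
    · have := rpow_one_sub_mul_lowerGamma_le hd_pos hlam.le (hx.trans hz.1.le)
      calc _ = z ^ ((1 : ℝ) - d) * lowerGamma ((d : ℝ) / 2) (lam * z ^ 2) * exp (lam * z ^ 2) :=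
            by ring
        _ ≤ C * z * exp (lam * z ^ 2) := by gcongr
        _ = _ := by ring
  rw [intervalIntegral.integral_const_mul, integral_mul_exp_mul_sq hlam.ne'] at hintegral
  rw [mfet, hθ]
  calc _ ≤ 1 / (lam ^ ((d : ℝ) / 2) * σ ^ 2) *
        (C * ((exp (lam * L ^ 2) - exp (lam * x ^ 2)) / (2 * lam))) := by gcongr
    _ = _ := by
      simp only [C]
      field_simp

theorem mfet_upper_bound_crude (d : ℕ) (hd : 1 ≤ d) (lam σ θ x L : ℝ) (hlam : 0 < lam)
    (hσ : 0 < σ) (hθ : θ = lam * σ ^ 2) (hx : 0 ≤ x) (hxL : x ≤ L) :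
    mfet d lam σ x L ≤ (1 / θ) * (Real.exp (lam * L ^ 2) - Real.exp (lam * x ^ 2)) / d :=
  mfet_upper_bound_crude_general d hd lam σ θ x L hlam hθ hx hxL
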